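/- arXiv:0711.1153 — 2 statements merged into one kernel-verified Lean document; each statement's English description precedes it below -/
import Mathlib

section
/- Let n ≥ 3 be a natural number and let a, b, c, W, α, γ be real numbers with a ≥ 0, b > 0, c ≥ 0, W ≥ 0, γ ≥ 0. Set β = √((n−2)/(n(n−1))). If a ≥ (α² + β)·b + γ·√(b·W), then the reaction term is nonpositive: ((n−2)/(n(n−1)))·(b − c) + α²·a + γ²·W − (b − c)²/(n·b) − a²/b ≤ 0. (This shows ρ ≤ 0 at a spatial maximum of φ = a/b that reaches the barrier Φ, which is the heart of the proof of the main Proposition.) -/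
theorem reaction_term_nonpositive (n : ℕ) (hn : 3 ≤ n)
    (a b c W α γ : ℝ) (ha : 0 ≤ a) (hb : 0 < b) (hc : 0 ≤ c) (hW : 0 ≤ W) (hγ : 0 ≤ γ)
    (h : a ≥ (α ^ 2 + Real.sqrt (((n : ℝ) - 2) / ((n : ℝ) * ((n : ℝ) - 1)))) * b
          + γ * Real.sqrt (b * W)) :
    ((n : ℝ) - 2) / ((n : ℝ) * ((n : ℝ) - 1)) * (b - c) + α ^ 2 * a + γ ^ 2 * W
        - (b - c) ^ 2 / ((n : ℝ) * b) - a ^ 2 / b ≤ 0 := by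
  have hn3 : (3 : ℝ) ≤ (n : ℝ) := by exact_mod_cast hn
  set N : ℝ := ((n : ℝ) - 2) / ((n : ℝ) * ((n : ℝ) - 1)) with hN
  set β : ℝ := Real.sqrt N with hβdef
  set s : ℝ := Real.sqrt (b * W) with hsdef
  have hNnn : 0 ≤ N := by
    apply div_nonneg <;> nlinarith
  have hβ0 : 0 ≤ β := Real.sqrt_nonneg _
  have hβ2 : β ^ 2 = N := Real.sq_sqrt hNnn
  have hs0 : 0 ≤ s := Real.sqrt_nonneg _
  have hs2 : s ^ 2 = b * W := Real.sq_sqrt (mul_nonneg hb.le hW)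
  have hd : 0 ≤ a - ((α ^ 2 + β) * b + γ * s) := by linarith
  have key : α ^ 2 * a * b + β ^ 2 * b ^ 2 + γ ^ 2 * (b * W) ≤ a ^ 2 := by
    nlinarith [mul_nonneg ha hd, mul_nonneg (mul_nonneg hβ0 hb.le) hd,
      mul_nonneg (mul_nonneg hγ hs0) hd, sq_nonneg α, sq_nonneg γ,
      mul_nonneg (mul_nonneg (sq_nonneg α) hb.le) (mul_nonneg hβ0 hb.le),
      mul_nonneg (mul_nonneg (sq_nonneg α) hb.le) (mul_nonneg hγ hs0),
      mul_nonneg (mul_nonneg hβ0 hb.le) (mul_nonneg hγ hs0)]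
  have hdiv : α ^ 2 * a + β ^ 2 * b + γ ^ 2 * W ≤ a ^ 2 / b := by
    rw [le_div_iff₀ hb]; nlinarith
  have hq : 0 ≤ (b - c) ^ 2 / ((n : ℝ) * b) := by
    apply div_nonneg (sq_nonneg _); nlinarith
  have hNc : N * (b - c) ≤ N * b := by nlinarith
  have hW2 : β ^ 2 * b = N * b := by rw [hβ2]
  linarith [hdiv, hq, hNc, hW2.le, hW2.ge]
end

section
/- Let X be a nonempty compact topological space, I ⊆ ℝ an interval, and φ : I × X → ℝ a continuous function such that the partial derivative ∂ₜφ exists and is continuous on I × X. Define φ_max(t) = max_{x ∈ X} φ(t, x). Then for every interior t ∈ I, the upper right Dini derivative of φ_max at t satisfies limsup_{h → 0⁺} (φ_max(t+h) − φ_max(t))/h ≤ max{ ∂ₜφ(t, x) : x ∈ X, φ(t, x) = φ_max(t) }. In particular, if ∂ₜφ(t, x) ≤ 0 at every point x where φ(t, ·) attains its maximum, then the upper right Dini derivative of φ_max at t is ≤ 0. (This is Hamilton's maximum-principle lemma invoked in the step 'φₜ ≤ 0 at the spatial maximum, hence d⁺/dt φ_max(t) ≤ 0'.) -/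
open scoped Topology

open Set Filter

/-!
Fix `D` larger than `∂ₜφ(t, x)` at every maximizer `x` of `φ(t, ·)`. Near a maximizer, `∂ₜφ < D`
on a product neighbourhood, so the mean value theorem gives `φ(t + h, z) ≤ max φ(t, ·) + D h`;
near a non-maximizer, the same bound holds for small `h` by continuity of `φ` alone, since
`φ(t, ·)` is strictly below its maximum there. Compactness of `X` makes the bound uniform, which
bounds the forward difference quotients of `φ_max` by `D`. The quotients are also bounded below
(by the slope of `φ(·, x₀)` at a maximizer `x₀`), so their `limsup` is a genuine one.
-/

lemma Filter.Eventually.forall_Icc_add {p : ℝ → Prop} {t : ℝ} (hp : ∀ᶠ s in 𝓝 t, p s) :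
    ∀ᶠ h in 𝓝 (0 : ℝ), ∀ s ∈ Icc t (t + h), p s := by
  have hIcc : Tendsto (fun h : ℝ => Icc t (t + h)) (𝓝 0) (𝓝 t).smallSets :=
    tendsto_const_nhds.Icc (by simpa using (continuous_const_add t).tendsto 0)
  exact hIcc.eventually (eventually_smallSets_forall.2 hp)

lemma ContinuousOn.eventually_continuousAt_prod {α β γ : Type*} [TopologicalSpace α]
    [TopologicalSpace β] [TopologicalSpace γ] {f : α × β → γ} {I : Set α} {t : α}
    (hf : ContinuousOn f (I ×ˢ univ)) (ht : t ∈ interior I) :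
    ∀ᶠ s in 𝓝 t, ∀ x, ContinuousAt f (s, x) :=
  (eventually_mem_nhds_iff.2 (mem_interior_iff_mem_nhds.1 ht)).mono fun _ hs _ =>
    hf.continuousAt (prod_mem_nhds hs univ_mem)

section

variable {X : Type*} [TopologicalSpace X] {φ φt : ℝ → X → ℝ} {t D : ℝ} {y : X}

lemma eventually_sub_le_mul_of_deriv_lt
    (hderiv : ∀ᶠ s in 𝓝 t, ∀ x, HasDerivAt (fun s => φ s x) (φt s x) s)
    (hφt : ContinuousAt (fun p : ℝ × X => φt p.1 p.2) (t, y)) (hy : φt t y < D) :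
    ∀ᶠ p in 𝓝 ((0 : ℝ), y), 0 ≤ p.1 → φ (t + p.1) p.2 - φ t p.2 ≤ D * p.1 := by
  have hlt : ∀ᶠ q in 𝓝 t ×ˢ 𝓝 y, φt q.1 q.2 < D := by
    rw [← nhds_prod_eq]; exact hφt.eventually_lt continuousAt_const hy
  obtain ⟨pa, hpa, pb, hpb, hab⟩ := eventually_prod_iff.1 hlt
  rw [nhds_prod_eq]
  filter_upwards [(hpa.and hderiv).forall_Icc_add.prod_mk hpb] with ⟨h, z⟩ ⟨hh, hz⟩ h0
  have hf : ∀ s ∈ Icc t (t + h), HasDerivAt (fun s => φ s z) (φt s z) s :=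
    fun s hs => (hh s hs).2 z
  have := (convex_Icc t (t + h)).image_sub_le_mul_sub_of_deriv_le
    (fun s hs => (hf s hs).continuousAt.continuousWithinAt)
    (fun s hs => (hf s (interior_subset hs)).differentiableAt.differentiableWithinAt)
    (fun s hs => ((hf s (interior_subset hs)).deriv).trans_le
      (hab (hh s (interior_subset hs)).1 hz).le)
    t (left_mem_Icc.2 (by simpa using h0)) (t + h) (right_mem_Icc.2 (by simpa using h0))
    (by simpa using h0)
  simpa using this

lemma eventually_lt_add_mul_of_lt {m : ℝ}
    (hφ : ContinuousAt (fun p : ℝ × X => φ p.1 p.2) (t, y)) (hy : φ t y < m) :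
    ∀ᶠ p in 𝓝 ((0 : ℝ), y), φ (t + p.1) p.2 < m + D * p.1 := by
  have hshift : ContinuousAt (fun p : ℝ × X => φ (t + p.1) p.2) (0, y) :=
    hφ.comp_of_eq (f := fun p : ℝ × X => (t + p.1, p.2)) (by fun_prop) (by simp)
  exact hshift.eventually_lt (by fun_prop) (by simpa using hy)

lemma eventually_forall_le_add_mul [CompactSpace X] {m : ℝ}
    (hφ : ∀ x, ContinuousAt (fun p : ℝ × X => φ p.1 p.2) (t, x))
    (hφt : ∀ x, ContinuousAt (fun p : ℝ × X => φt p.1 p.2) (t, x))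
    (hderiv : ∀ᶠ s in 𝓝 t, ∀ x, HasDerivAt (fun s => φ s x) (φt s x) s)
    (hm : ∀ x, φ t x ≤ m) (hD : ∀ x, φ t x = m → φt t x < D) :
    ∀ᶠ h in 𝓝 (0 : ℝ), ∀ x, 0 ≤ h → φ (t + h) x ≤ m + D * h := by
  refine (isCompact_univ.eventually_forall_of_forall_eventually fun y _ => ?_).mono
    fun h hh x => hh x trivial
  rcases (hm y).lt_or_eq with hlt | heq
  · exact (eventually_lt_add_mul_of_lt (hφ y) hlt).mono fun p hp _ => hp.le
  · filter_upwards [eventually_sub_le_mul_of_deriv_lt hderiv (hφt y) (hD y heq)] with p hp h0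
    linarith [hp h0, hm p.2]

lemma continuous_of_forall_continuousAt_prod
    (hφ : ∀ x, ContinuousAt (fun p : ℝ × X => φ p.1 p.2) (t, x)) : Continuous (φ t) :=
  continuous_iff_continuousAt.2 fun x =>
    (hφ x).comp (f := fun x : X => (t, x)) (by fun_prop)

lemma eventually_slope_iSup_le [CompactSpace X] [Nonempty X]
    (hφ : ∀ x, ContinuousAt (fun p : ℝ × X => φ p.1 p.2) (t, x))
    (hφt : ∀ x, ContinuousAt (fun p : ℝ × X => φt p.1 p.2) (t, x))
    (hderiv : ∀ᶠ s in 𝓝 t, ∀ x, HasDerivAt (fun s => φ s x) (φt s x) s)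
    (hD : ∀ x, φ t x = ⨆ x', φ t x' → φt t x < D) :
    ∀ᶠ h in 𝓝[>] 0, ((⨆ x, φ (t + h) x) - ⨆ x, φ t x) / h ≤ D := by
  have hm : ∀ x, φ t x ≤ ⨆ x', φ t x' := le_ciSup
    (isCompact_range (continuous_of_forall_continuousAt_prod hφ)).bddAbove
  filter_upwards [nhdsWithin_le_nhds (eventually_forall_le_add_mul hφ hφt hderiv hm hD),
    self_mem_nhdsWithin] with h hh (h0 : 0 < h)
  rw [div_le_iff₀ h0, sub_le_iff_le_add']
  exact ciSup_le fun x => hh x h0.le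

lemma isCoboundedUnder_le_slope_iSup [CompactSpace X] {x₀ : X} {d : ℝ}
    (hcont : ∀ᶠ s in 𝓝 t, Continuous (φ s)) (hmax : ∀ x, φ t x ≤ φ t x₀)
    (hderiv : HasDerivAt (fun s => φ s x₀) d t) :
    IsCoboundedUnder (· ≤ ·) (𝓝[>] 0)
      (fun h : ℝ => ((⨆ x, φ (t + h) x) - ⨆ x, φ t x) / h) := by
  have hslope : ∀ᶠ h in 𝓝[>] (0 : ℝ), d - 1 < (φ (t + h) x₀ - φ t x₀) / h := by
    simpa [div_eq_inv_mul] using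
      hderiv.tendsto_slope_zero_right.eventually (lt_mem_nhds (sub_one_lt d))
  have hshift : Tendsto (fun h : ℝ => t + h) (𝓝[>] 0) (𝓝 t) :=
    ((continuous_const_add t).tendsto' 0 t (add_zero t)).mono_left nhdsWithin_le_nhds
  refine isCoboundedUnder_le_of_eventually_le _ (x := d - 1) ?_
  filter_upwards [hslope, hshift.eventually hcont, self_mem_nhdsWithin]
    with h hh hc (h0 : 0 < h)
  refine hh.le.trans (div_le_div_of_nonneg_right ?_ h0.le)
  gcongr
  · exact le_ciSup (isCompact_range hc).bddAbove x₀
  · have : Nonempty X := ⟨x₀⟩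
    exact ciSup_le hmax

end

theorem dini_derivative_of_max_le_general (X : Type*) [TopologicalSpace X] [CompactSpace X]
    [Nonempty X] (I : Set ℝ)
    (φ φt : ℝ → X → ℝ)
    (hφ : ContinuousOn (fun p : ℝ × X => φ p.1 p.2) (I ×ˢ Set.univ))
    (hφt : ∀ t ∈ I, ∀ x, HasDerivWithinAt (fun s => φ s x) (φt t x) I t)
    (hφt_cont : ContinuousOn (fun p : ℝ × X => φt p.1 p.2) (I ×ˢ Set.univ)) :
    ∀ t ∈ interior I,
      (Filter.limsup (fun h : ℝ => ((⨆ x, φ (t + h) x) - ⨆ x, φ t x) / h)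
          (nhdsWithin 0 (Set.Ioi 0))
        ≤ sSup {d : ℝ | ∃ x, φ t x = (⨆ x', φ t x') ∧ d = φt t x}) ∧
      ((∀ x, φ t x = (⨆ x', φ t x') → φt t x ≤ 0) →
        Filter.limsup (fun h : ℝ => ((⨆ x, φ (t + h) x) - ⨆ x, φ t x) / h)
          (nhdsWithin 0 (Set.Ioi 0)) ≤ 0) := by
  intro t ht
  have hφc := hφ.eventually_continuousAt_prod ht
  have hφtc := hφt_cont.eventually_continuousAt_prod ht
  have hderiv : ∀ᶠ s in 𝓝 t, ∀ x, HasDerivAt (fun s => φ s x) (φt s x) s :=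
    (eventually_mem_nhds_iff.2 (mem_interior_iff_mem_nhds.1 ht)).mono fun s hs x =>
      (hφt s (mem_of_mem_nhds hs) x).hasDerivAt hs
  obtain ⟨x₀, -, hx₀⟩ := isCompact_univ.exists_isMaxOn univ_nonempty
    (continuous_of_forall_continuousAt_prod hφc.self_of_nhds).continuousOn
  have hcobdd := isCoboundedUnder_le_slope_iSup
    (hφc.mono fun _ => continuous_of_forall_continuousAt_prod) (fun x => hx₀ trivial)
    (hderiv.self_of_nhds x₀)
  set L := sSup {d : ℝ | ∃ x, φ t x = (⨆ x', φ t x') ∧ d = φt t x}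
  have hL : ∀ x, φ t x = ⨆ x', φ t x' → φt t x ≤ L := fun x hx =>
    le_csSup ((isCompact_range (continuous_of_forall_continuousAt_prod
      hφtc.self_of_nhds)).bddAbove.mono (by rintro _ ⟨x, -, rfl⟩; exact ⟨x, rfl⟩))
      ⟨x, hx, rfl⟩
  have hlimsup : limsup (fun h : ℝ => ((⨆ x, φ (t + h) x) - ⨆ x, φ t x) / h) (𝓝[>] 0) ≤ L :=
    le_of_forall_pos_le_add fun ε hε => limsup_le_of_le hcobdd <|
      eventually_slope_iSup_le hφc.self_of_nhds hφtc.self_of_nhds hderiv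
        fun x hx => (hL x hx).trans_lt (lt_add_of_pos_right L hε)
  exact ⟨hlimsup, fun hnonpos => hlimsup.trans <| Real.sSup_nonpos <| by
    rintro _ ⟨x, hx, rfl⟩; exact hnonpos x hx⟩

theorem dini_derivative_of_max_le (X : Type*) [TopologicalSpace X] [CompactSpace X]
    [Nonempty X] (I : Set ℝ) (hI : I.OrdConnected)
    (φ φt : ℝ → X → ℝ)
    (hφ : ContinuousOn (fun p : ℝ × X => φ p.1 p.2) (I ×ˢ Set.univ))
    (hφt : ∀ t ∈ I, ∀ x, HasDerivWithinAt (fun s => φ s x) (φt t x) I t)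
    (hφt_cont : ContinuousOn (fun p : ℝ × X => φt p.1 p.2) (I ×ˢ Set.univ)) :
    ∀ t ∈ interior I,
      (Filter.limsup (fun h : ℝ => ((⨆ x, φ (t + h) x) - ⨆ x, φ t x) / h)
          (nhdsWithin 0 (Set.Ioi 0))
        ≤ sSup {d : ℝ | ∃ x, φ t x = (⨆ x', φ t x') ∧ d = φt t x}) ∧
      ((∀ x, φ t x = (⨆ x', φ t x') → φt t x ≤ 0) →
        Filter.limsup (fun h : ℝ => ((⨆ x, φ (t + h) x) - ⨆ x, φ t x) / h)
          (nhdsWithin 0 (Set.Ioi 0)) ≤ 0) :=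
  dini_derivative_of_max_le_general X I φ φt hφ hφt hφt_cont
end
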